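/- arXiv:1612.03643 — 2 statements merged into one kernel-verified Lean document; each statement's English description precedes it below -/
import Mathlib

section
/- Let (𝛁, ⋆, e) be an almost Saito structure on a manifold N with parameter r ∈ ℂ and unit E. Let P(x) = e⋆x and assume P is invertible (working on the open subset N_0 where it has full rank, assumed nonempty). Define x∗y = x⋆P^{-1}(y) and ∇_x y = 𝛁_x y − 𝛁_{x∗y} e. Then: (1) ∗ is commutative and associative with unit e; (2) ∇ is torsion-free and flat; (3) (∇, ∗, E) is a Saito structure on N_0. -/
universe u v

/-- Abstract model of the holomorphic vector fields on a complex manifold: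
`A` is the commutative `ℂ`-algebra of holomorphic functions and `X` is the
`A`-module of vector fields, equipped with a Lie bracket and with an action of
vector fields on functions by derivations. -/
structure VectorFields (A : Type u) (X : Type v) [CommRing A] [Algebra ℂ A]
    [AddCommGroup X] [Module A X] where
  bracket : X → X → X
  act : X → A → A
  bracket_add_left : ∀ x y z : X, bracket (x + y) z = bracket x z + bracket y z
  bracket_antisymm : ∀ x y : X, bracket x y = - bracket y x
  jacobi : ∀ x y z : X,
    bracket x (bracket y z) + bracket y (bracket z x) + bracket z (bracket x y) = 0
  act_add_left : ∀ (x y : X) (f : A), act (x + y) f = act x f + act y f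
  act_smul_left : ∀ (f : A) (x : X) (g : A), act (f • x) g = f * act x g
  act_add_right : ∀ (x : X) (f g : A), act x (f + g) = act x f + act x g
  act_mul_right : ∀ (x : X) (f g : A), act x (f * g) = act x f * g + f * act x g
  act_algebraMap : ∀ (x : X) (c : ℂ), act x (algebraMap ℂ A c) = 0
  bracket_smul_right : ∀ (x : X) (f : A) (y : X),
    bracket x (f • y) = act x f • y + f • bracket x y
  act_bracket : ∀ (x y : X) (f : A),
    act (bracket x y) f = act x (act y f) - act y (act x f)

variable {A : Type u} {X : Type v} [CommRing A] [Algebra ℂ A]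
  [AddCommGroup X] [Module A X]

/-- A torsion-free flat connection on the tangent bundle: `ℂ`-bilinear,
`O`-linear in the first argument, Leibniz in the second, with vanishing
torsion and vanishing curvature. -/
structure IsTFFlatConnection (V : VectorFields A X) (conn : X → X → X) : Prop where
  add_left : ∀ x y z : X, conn (x + y) z = conn x z + conn y z
  smul_left : ∀ (f : A) (x y : X), conn (f • x) y = f • conn x y
  add_right : ∀ x y z : X, conn x (y + z) = conn x y + conn x z
  leibniz : ∀ (x : X) (f : A) (y : X), conn x (f • y) = V.act x f • y + f • conn x y
  torsion_free : ∀ x y : X, conn x y - conn y x = V.bracket x y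
  flat : ∀ x y z : X, conn x (conn y z) - conn y (conn x z) = conn (V.bracket x y) z

/-- An `O`-bilinear, commutative, associative multiplication on vector fields
with unit `e`. -/
structure IsUnitalMul (mul : X → X → X) (e : X) : Prop where
  add_left : ∀ x y z : X, mul (x + y) z = mul x z + mul y z
  smul_left : ∀ (f : A) (x y : X), mul (f • x) y = f • mul x y
  comm : ∀ x y : X, mul x y = mul y x
  assoc : ∀ x y z : X, mul (mul x y) z = mul x (mul y z)
  unit : ∀ x : X, mul e x = x

/-- A Saito structure (without metric) on a manifold, with connection `conn`,
multiplication `mul` with unit `e`, and Euler vector field `E`. -/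
structure IsSaitoStructure (V : VectorFields A X) (conn mul : X → X → X) (e E : X) :
    Prop where
  conn_flat : IsTFFlatConnection V conn
  mul_unital : IsUnitalMul (A := A) mul e
  SS1 : ∀ x y z : X,
    conn x (mul y z) - mul y (conn x z) - conn y (mul x z) + mul x (conn y z)
      = mul (V.bracket x y) z
  SS2 : ∀ x y : X,
    V.bracket E (mul x y) - mul (V.bracket E x) y - mul x (V.bracket E y) = mul x y
  SS3 : ∀ x : X, conn x e = 0
  SS4 : ∀ x y : X, conn x (conn y E) - conn (conn x y) E = 0

/-- An almost Saito structure with parameter `r`, with connection `conn`,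
multiplication `mul` with unit `E`, and nonzero vector field `e`. -/
structure IsAlmostSaitoStructure (V : VectorFields A X) (conn mul : X → X → X)
    (e E : X) (r : ℂ) : Prop where
  conn_flat : IsTFFlatConnection V conn
  mul_unital : IsUnitalMul (A := A) mul E
  e_ne_zero : e ≠ 0
  ASS1 : ∀ x y z : X,
    conn x (mul y z) - mul y (conn x z) - conn y (mul x z) + mul x (conn y z)
      = mul (V.bracket x y) z
  ASS2 : ∀ x y : X,
    V.bracket e (mul x y) - mul (V.bracket e x) y - mul x (V.bracket e y)
      + mul e (mul x y) = 0
  ASS3 : ∀ x : X, conn x E = algebraMap ℂ A r • x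
  ASS4 : ∀ x y : X,
    conn x (conn y e) - conn (conn x y) e + conn (mul x y) e = 0

/-!
The twisted product `x ∗ y = x ⋆ P⁻¹ y` is commutative and associative because `P⁻¹` commutes
with `⋆`-multiplication, and `e` is its unit because `P = e ⋆ ·`.  Everything else rests on the
derivative of `P`, which (ASS1), (ASS2) and torsion-freeness give as
`𝛁ₓ (e ⋆ w) = e ⋆ 𝛁ₓ w - e ⋆ x ⋆ w + 𝛁_{x ⋆ w} e - x ⋆ 𝛁_w e`.
Transported through `P⁻¹`, (ASS1) becomes the compatibility (SS1) of `∇` with `∗`; applying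
`𝛁_· e` to that identity and using (ASS4) turns flatness of `𝛁` into flatness of `∇`.
For the Euler field, (ASS1) and (ASS3) make `[E, ·]` a derivation of `⋆`, and (ASS2) at
`x = y = E` gives `[E, e] = -e`; hence `[E, P⁻¹ y] = P⁻¹ [E, y] + P⁻¹ y`, which is (SS2).
Finally `∇ₓ E = r x - 𝛁_{P⁻¹ x} e`, so (SS4) reduces to (ASS4).
-/

set_option linter.unusedSectionVars false

def twistedMul (mul : X → X → X) (P : X ≃ₗ[A] X) (x y : X) : X := mul x (P.symm y)

def twistedConn (conn mul : X → X → X) (P : X ≃ₗ[A] X) (e x y : X) : X :=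
  conn x y - conn (twistedMul mul P x y) e

namespace IsUnitalMul

variable {mul : X → X → X} {u : X}

theorem mul_add (hmu : IsUnitalMul (A := A) mul u) (x y z : X) :
    mul x (y + z) = mul x y + mul x z := by
  rw [hmu.comm, hmu.add_left, hmu.comm y, hmu.comm z]

theorem mul_smul (hmu : IsUnitalMul (A := A) mul u) (f : A) (x y : X) :
    mul x (f • y) = f • mul x y := by
  rw [hmu.comm, hmu.smul_left, hmu.comm y]

def mulLeft (hmu : IsUnitalMul (A := A) mul u) (x : X) : X →ₗ[A] X where
  toFun := mul x
  map_add' := hmu.mul_add x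
  map_smul' f y := hmu.mul_smul f x y

theorem mul_sub (hmu : IsUnitalMul (A := A) mul u) (x y z : X) :
    mul x (y - z) = mul x y - mul x z :=
  map_sub (hmu.mulLeft x) y z

theorem sub_mul (hmu : IsUnitalMul (A := A) mul u) (x y z : X) :
    mul (x - y) z = mul x z - mul y z := by
  rw [hmu.comm, hmu.mul_sub, hmu.comm z, hmu.comm z]

theorem neg_mul (hmu : IsUnitalMul (A := A) mul u) (x y : X) : mul (-x) y = -mul x y := by
  rw [hmu.comm, hmu.comm x]
  exact map_neg (hmu.mulLeft y) x

theorem mul_unit (hmu : IsUnitalMul (A := A) mul u) (x : X) : mul x u = x := by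
  rw [hmu.comm, hmu.unit]

theorem mul_left_comm (hmu : IsUnitalMul (A := A) mul u) (x y z : X) :
    mul x (mul y z) = mul y (mul x z) := by
  rw [← hmu.assoc, hmu.comm x y, hmu.assoc]

variable {e : X} (P : X ≃ₗ[A] X)

theorem symm_mul (hmu : IsUnitalMul (A := A) mul u) (hP : ∀ v, P v = mul e v) (x v : X) :
    P.symm (mul x v) = mul x (P.symm v) := by
  apply P.injective
  rw [P.apply_symm_apply, hP, hmu.mul_left_comm, ← hP, P.apply_symm_apply]

theorem mul_symm_comm (hmu : IsUnitalMul (A := A) mul u) (hP : ∀ v, P v = mul e v) (x y : X) :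
    mul x (P.symm y) = mul y (P.symm x) := by
  rw [← hmu.symm_mul P hP, ← hmu.symm_mul P hP, hmu.comm]

theorem twisted (hmu : IsUnitalMul (A := A) mul u) (hP : ∀ v, P v = mul e v) :
    IsUnitalMul (A := A) (twistedMul mul P) e where
  add_left x y z := hmu.add_left x y (P.symm z)
  smul_left f x y := hmu.smul_left f x (P.symm y)
  comm := hmu.mul_symm_comm P hP
  assoc x y z := by
    simp only [twistedMul]
    rw [hmu.assoc, hmu.symm_mul P hP, hmu.mul_symm_comm P hP y, hmu.comm (P.symm y)]
  unit x := by rw [twistedMul, ← hP, P.apply_symm_apply]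

theorem twistedMul_unit (hmu : IsUnitalMul (A := A) mul u) (hP : ∀ v, P v = mul e v) (x : X) :
    twistedMul mul P x u = P.symm x := by
  rw [twistedMul, hmu.mul_symm_comm P hP, hmu.unit]

end IsUnitalMul

namespace IsTFFlatConnection

variable {V : VectorFields A X} {conn : X → X → X}

theorem sub_conn (hc : IsTFFlatConnection V conn) (x y z : X) :
    conn (x - y) z = conn x z - conn y z := by
  rw [sub_eq_add_neg, hc.add_left, ← neg_one_smul A y, hc.smul_left, neg_one_smul,
    ← sub_eq_add_neg]

theorem conn_algebraMap_smul (hc : IsTFFlatConnection V conn) (c : ℂ) (x y : X) :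
    conn x (algebraMap ℂ A c • y) = algebraMap ℂ A c • conn x y := by
  rw [hc.leibniz, V.act_algebraMap, zero_smul, zero_add]

theorem conn_sub (hc : IsTFFlatConnection V conn) (x y z : X) :
    conn x (y - z) = conn x y - conn x z := by
  have hneg : ∀ w : X, -w = algebraMap ℂ A (-1) • w := fun w => by simp
  rw [sub_eq_add_neg, hc.add_right, hneg, hc.conn_algebraMap_smul, ← hneg, ← sub_eq_add_neg]

end IsTFFlatConnection

namespace IsAlmostSaitoStructure

variable {V : VectorFields A X} {conn mul : X → X → X} {e E : X} {r : ℂ} (P : X ≃ₗ[A] X)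

theorem conn_conn_e (h : IsAlmostSaitoStructure V conn mul e E r) (x y : X) :
    conn x (conn y e) = conn (conn x y) e - conn (mul x y) e := by
  linear_combination (norm := abel) h.ASS4 x y

theorem conn_mul_e (h : IsAlmostSaitoStructure V conn mul e E r) (x w : X) :
    conn x (mul e w)
      = mul e (conn x w) - mul e (mul x w) + conn (mul x w) e - mul x (conn w e) := by
  have hmu := h.mul_unital
  have swap : ∀ a b : X, conn a b = V.bracket a b + conn b a := fun a b => by
    rw [← h.conn_flat.torsion_free]; abel
  have ass1 := h.ASS1 x e w
  rw [swap e, swap e w, V.bracket_antisymm x e, hmu.neg_mul, hmu.mul_add] at ass1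
  linear_combination (norm := abel) ass1 + h.ASS2 x w

theorem symm_conn (h : IsAlmostSaitoStructure V conn mul e E r) (hP : ∀ v, P v = mul e v)
    (x y : X) :
    P.symm (conn x y) = conn x (P.symm y) - mul x (P.symm y)
      + P.symm (conn (mul x (P.symm y)) e) - mul x (P.symm (conn (P.symm y) e)) := by
  conv_lhs => rw [← P.apply_symm_apply y, hP, h.conn_mul_e]
  simp only [map_sub, map_add, ← hP, P.symm_apply_apply, h.mul_unital.symm_mul P hP]

theorem twistedMul_compat (h : IsAlmostSaitoStructure V conn mul e E r)
    (hP : ∀ v, P v = mul e v) (x y z : X) :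
    conn x (twistedMul mul P y z) - twistedMul mul P y (conn x z)
      - conn y (twistedMul mul P x z) + twistedMul mul P x (conn y z)
      + twistedMul mul P y (conn (twistedMul mul P x z) e)
      - twistedMul mul P x (conn (twistedMul mul P y z) e)
      = twistedMul mul P (V.bracket x y) z := by
  have hmu := h.mul_unital
  simp only [twistedMul, h.symm_conn P hP x z, h.symm_conn P hP y z, hmu.mul_sub, hmu.mul_add]
  rw [hmu.mul_left_comm y x (P.symm z), hmu.mul_left_comm y x (P.symm (conn (P.symm z) e))]
  linear_combination (norm := abel) h.ASS1 x y (P.symm z)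

theorem twistedConn_flat (h : IsAlmostSaitoStructure V conn mul e E r)
    (hP : ∀ v, P v = mul e v) (x y z : X) :
    twistedConn conn mul P e x (twistedConn conn mul P e y z)
      - twistedConn conn mul P e y (twistedConn conn mul P e x z)
      = twistedConn conn mul P e (V.bracket x y) z := by
  have hc := h.conn_flat
  have compat := congrArg (conn · e) (h.twistedMul_compat P hP x y z)
  simp only [hc.sub_conn, hc.add_left] at compat
  have hsymm : mul x (twistedMul mul P y z) = mul y (twistedMul mul P x z) :=
    h.mul_unital.mul_left_comm x y _
  simp only [twistedConn, hc.conn_sub, hc.sub_conn, h.conn_conn_e, hsymm,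
    (h.mul_unital.twisted P hP).mul_sub]
  linear_combination (norm := abel) hc.flat x y z - compat

theorem isTFFlatConnection_twistedConn (h : IsAlmostSaitoStructure V conn mul e E r)
    (hP : ∀ v, P v = mul e v) : IsTFFlatConnection V (twistedConn conn mul P e) := by
  have hc := h.conn_flat
  have hmu₂ := h.mul_unital.twisted P hP
  refine ⟨fun x y z => ?_, fun f x y => ?_, fun x y z => ?_, fun x f y => ?_, fun x y => ?_,
    h.twistedConn_flat P hP⟩
  · simp only [twistedConn, hmu₂.add_left, hc.add_left]; abel
  · simp only [twistedConn, hmu₂.smul_left, hc.smul_left, smul_sub]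
  · simp only [twistedConn, hmu₂.mul_add, hc.add_right, hc.add_left]; abel
  · simp only [twistedConn, hmu₂.mul_smul, hc.leibniz, hc.smul_left, smul_sub]; abel
  · simp only [twistedConn, hmu₂.comm y x, ← hc.torsion_free x y]; abel

theorem twistedConn_SS1 (h : IsAlmostSaitoStructure V conn mul e E r)
    (hP : ∀ v, P v = mul e v) (x y z : X) :
    twistedConn conn mul P e x (twistedMul mul P y z)
      - twistedMul mul P y (twistedConn conn mul P e x z)
      - twistedConn conn mul P e y (twistedMul mul P x z)
      + twistedMul mul P x (twistedConn conn mul P e y z)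
      = twistedMul mul P (V.bracket x y) z := by
  have hmu₂ := h.mul_unital.twisted P hP
  simp only [twistedConn, hmu₂.mul_sub, ← hmu₂.assoc, hmu₂.comm y x]
  linear_combination (norm := abel) h.twistedMul_compat P hP x y z

theorem bracket_E_eq (h : IsAlmostSaitoStructure V conn mul e E r) (x : X) :
    V.bracket E x = conn E x - algebraMap ℂ A r • x := by
  rw [← h.conn_flat.torsion_free, h.ASS3]

theorem bracket_E_mul (h : IsAlmostSaitoStructure V conn mul e E r) (x y : X) :
    V.bracket E (mul x y) = mul (V.bracket E x) y + mul x (V.bracket E y) := by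
  have hmu := h.mul_unital
  have ass1 := h.ASS1 E x y
  simp only [hmu.unit, h.bracket_E_eq, hmu.sub_mul, hmu.smul_left] at ass1
  simp only [h.bracket_E_eq, hmu.sub_mul, hmu.mul_sub, hmu.smul_left, hmu.mul_smul]
  linear_combination (norm := abel) ass1

theorem bracket_E_e (h : IsAlmostSaitoStructure V conn mul e E r) : V.bracket E e = -e := by
  have ass2 := h.ASS2 E E
  simp only [h.mul_unital.unit, h.mul_unital.mul_unit] at ass2
  rw [V.bracket_antisymm]
  linear_combination (norm := abel) ass2

theorem bracket_E_symm (h : IsAlmostSaitoStructure V conn mul e E r)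
    (hP : ∀ v, P v = mul e v) (y : X) :
    V.bracket E (P.symm y) = P.symm (V.bracket E y) + P.symm y := by
  have hPy : V.bracket E y = -y + P (V.bracket E (P.symm y)) := by
    conv_lhs => rw [← P.apply_symm_apply y, hP]
    rw [h.bracket_E_mul, h.bracket_E_e, h.mul_unital.neg_mul, ← hP, ← hP, P.apply_symm_apply]
  rw [hPy, map_add, P.symm_apply_apply, map_neg]
  abel

theorem twistedMul_SS2 (h : IsAlmostSaitoStructure V conn mul e E r)
    (hP : ∀ v, P v = mul e v) (x y : X) :
    V.bracket E (twistedMul mul P x y) - twistedMul mul P (V.bracket E x) y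
      - twistedMul mul P x (V.bracket E y) = twistedMul mul P x y := by
  simp only [twistedMul, h.bracket_E_mul, h.bracket_E_symm P hP, h.mul_unital.mul_add]
  abel

theorem symm_twistedConn (h : IsAlmostSaitoStructure V conn mul e E r)
    (hP : ∀ v, P v = mul e v) (x y : X) :
    P.symm (twistedConn conn mul P e x y)
      = conn x (P.symm y) - mul x (P.symm y) - mul x (P.symm (conn (P.symm y) e)) := by
  rw [twistedConn, twistedMul, map_sub, h.symm_conn P hP]
  abel

theorem twistedConn_E (h : IsAlmostSaitoStructure V conn mul e E r)
    (hP : ∀ v, P v = mul e v) (x : X) :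
    twistedConn conn mul P e x E = algebraMap ℂ A r • x - conn (P.symm x) e := by
  rw [twistedConn, h.ASS3, h.mul_unital.twistedMul_unit P hP]

theorem twistedConn_SS4 (h : IsAlmostSaitoStructure V conn mul e E r)
    (hP : ∀ v, P v = mul e v) (x y : X) :
    twistedConn conn mul P e x (twistedConn conn mul P e y E)
      - twistedConn conn mul P e (twistedConn conn mul P e x y) E = 0 := by
  have hc := h.conn_flat
  have hc₂ := h.isTFFlatConnection_twistedConn P hP
  rw [h.twistedConn_E P hP, h.twistedConn_E P hP, hc₂.conn_sub, hc₂.conn_algebraMap_smul,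
    h.symm_twistedConn P hP]
  simp only [twistedConn, twistedMul, h.conn_conn_e, hc.sub_conn]
  abel

theorem isSaitoStructure_twisted (h : IsAlmostSaitoStructure V conn mul e E r)
    (hP : ∀ v, P v = mul e v) :
    IsSaitoStructure V (twistedConn conn mul P e) (twistedMul mul P) e E where
  conn_flat := h.isTFFlatConnection_twistedConn P hP
  mul_unital := h.mul_unital.twisted P hP
  SS1 := h.twistedConn_SS1 P hP
  SS2 := h.twistedMul_SS2 P hP
  SS3 x := by rw [twistedConn, (h.mul_unital.twisted P hP).mul_unit, sub_self]
  SS4 := h.twistedConn_SS4 P hP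

end IsAlmostSaitoStructure

/-- Proposition 3.5 (1)-(3) of the paper: from an almost Saito structure
`(𝛁, ⋆, e)` with parameter `r` and unit `E` one constructs a Saito structure
`(∇, ∗, E)` on the subset `N₀` where `P x = e ⋆ x` is invertible.  Here
`x ∗ y = x ⋆ P⁻¹(y)` and `∇ₓ y = 𝛁ₓ y - 𝛁_{x ∗ y} e`. -/
theorem almost_saito_to_saito
    (V : VectorFields A X) (conn mul : X → X → X) (e E : X) (r : ℂ)
    (h : IsAlmostSaitoStructure V conn mul e E r)
    (hP : Function.Bijective fun v : X => mul e v) :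
    ∀ mul2 conn2 : X → X → X,
      (∀ x y : X, mul2 x y = mul x (Function.invFun (fun v : X => mul e v) y)) →
      (∀ x y : X, conn2 x y = conn x y - conn (mul2 x y) e) →
      IsUnitalMul (A := A) mul2 e ∧
      IsTFFlatConnection V conn2 ∧
      IsSaitoStructure V conn2 mul2 e E := by
  intro mul2 conn2 hmul2 hconn2
  let P : X ≃ₗ[A] X := LinearEquiv.ofBijective (h.mul_unital.mulLeft e) hP
  have hinv : Function.invFun (fun v : X => mul e v) = P.symm :=
    Function.invFun_eq_of_injective_of_rightInverse hP.1 P.apply_symm_apply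
  obtain rfl : mul2 = twistedMul mul P := by
    funext x y
    rw [hmul2, hinv, twistedMul]
  obtain rfl : conn2 = twistedConn conn mul P e := funext₂ hconn2
  have saito := h.isSaitoStructure_twisted P fun _ => rfl
  exact ⟨saito.mul_unital, saito.conn_flat, saito⟩
end

section
/- Let (∇, ∗, E) be a Saito structure on M with unit e, fix λ ∈ ℂ, and on the open subset M_λ where U_λ(x) = (E − λe)∗x is invertible define x⋆_λ y = U_λ^{-1}(x∗y) and 𝛁^{(λ,0)}_x y = ∇_x y − ∇_{x⋆_λ y} E. Then (M_λ, ∇, 𝛁^{(λ,0)}, ∗, ⋆_λ, e, E − λe) is a bi-flat F-manifold; in particular ∇ and 𝛁^{(λ,0)} are almost hydrodynamically equivalent: 𝛁^{(λ,0)}_x(y∗z) − 𝛁^{(λ,0)}_y(x∗z) = ∇_x(y∗z) − ∇_y(x∗z) for all vector fields x, y, z on M_λ. -/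
universe u v

variable {A : Type u} {X : Type v} [CommRing A] [Algebra ℂ A]
  [AddCommGroup X] [Module A X]

/-- A bi-flat `F`-manifold (Arsie–Lorenzoni). -/
structure IsBiFlat (V : VectorFields A X) (conn1 conn2 mul1 mul2 : X → X → X)
    (e E : X) : Prop where
  conn1_flat : IsTFFlatConnection V conn1
  conn2_flat : IsTFFlatConnection V conn2
  mul1_unital : IsUnitalMul (A := A) mul1 e
  mul2_unital : IsUnitalMul (A := A) mul2 E
  SS1 : ∀ x y z : X,
    conn1 x (mul1 y z) - mul1 y (conn1 x z) - conn1 y (mul1 x z) + mul1 x (conn1 y z)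
      = mul1 (V.bracket x y) z
  SS2 : ∀ x y : X,
    V.bracket E (mul1 x y) - mul1 (V.bracket E x) y - mul1 x (V.bracket E y) = mul1 x y
  SS3 : ∀ x : X, conn1 x e = 0
  ASS1 : ∀ x y z : X,
    conn2 x (mul2 y z) - mul2 y (conn2 x z) - conn2 y (mul2 x z) + mul2 x (conn2 y z)
      = mul2 (V.bracket x y) z
  ASS3 : ∀ x : X, conn2 x E = 0
  U_bijective : Function.Bijective fun v : X => mul1 E v
  U_compat : ∀ x y : X, mul1 E (mul2 x y) = mul1 x y
  hydro : ∀ x y z : X,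
    conn2 x (mul1 y z) - conn2 y (mul1 x z) = conn1 x (mul1 y z) - conn1 y (mul1 x z)

/-!
The dual product `⋆` is `∗` transported by the invertible operator `U = E ∗ ·`, so it is
commutative, associative, has unit `E`, and is `U`-compatible by construction. The properties
of the dual connection `𝛁_x y = ∇_x y - ∇_{x ⋆ y} E` come from one mixed identity
`∇_x (y ⋆ z) - y ⋆ 𝛁_x z - (x ↔ y) = [x, y] ⋆ z`: applying `U` reduces it to (SS1) and to
the identity `E ∗ ∇_x z = ∇_x (E ∗ z) + x ∗ ∇_z E - x ∗ z - ∇_{x ∗ z} E` obtained from (SS1)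
and (SS2). Differentiating the mixed identity along `E` with (SS4) gives the flatness of `𝛁`,
and symmetrising it gives (ASS1). Replacing `E` by `E - λe` preserves the Saito axioms, which
reduces the theorem to `λ = 0`.
-/

namespace VectorFields

variable (V : VectorFields A X)

theorem bracket_algebraMap_smul_left (c : ℂ) (a w : X) :
    V.bracket (algebraMap ℂ A c • a) w = algebraMap ℂ A c • V.bracket a w := by
  rw [V.bracket_antisymm, V.bracket_smul_right, V.act_algebraMap, zero_smul, zero_add,
    ← smul_neg, ← V.bracket_antisymm]

theorem bracket_sub_left (a b w : X) :
    V.bracket (a - b) w = V.bracket a w - V.bracket b w := by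
  have hneg : V.bracket (-b) w = -V.bracket b w := by
    simpa using V.bracket_algebraMap_smul_left (-1) b w
  rw [sub_eq_add_neg, V.bracket_add_left, hneg, ← sub_eq_add_neg]

end VectorFields

namespace IsUnitalMul

omit [Algebra ℂ A]

variable {mul : X → X → X} {e : X} (hM : IsUnitalMul (A := A) mul e)
include hM

theorem add_right (x y z : X) : mul x (y + z) = mul x y + mul x z := by
  rw [hM.comm, hM.add_left, hM.comm y, hM.comm z]

theorem smul_right (f : A) (x y : X) : mul x (f • y) = f • mul x y := by
  rw [hM.comm, hM.smul_left, hM.comm y]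

theorem sub_left (x y z : X) : mul (x - y) z = mul x z - mul y z := by
  rw [sub_eq_add_neg, ← neg_one_smul A y, hM.add_left, hM.smul_left, neg_one_smul,
    ← sub_eq_add_neg]

theorem sub_right (x y z : X) : mul x (y - z) = mul x y - mul x z := by
  rw [hM.comm, hM.sub_left, hM.comm y, hM.comm z]

theorem left_comm (x y z : X) : mul x (mul y z) = mul y (mul x z) := by
  rw [← hM.assoc, hM.comm x y, hM.assoc]

theorem dual {star : X → X → X} {E : X}
    (hinj : Function.Injective (mul E)) (hstar : ∀ x y : X, mul E (star x y) = mul x y) :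
    IsUnitalMul (A := A) star E := by
  have swap (x y z : X) : mul x (star y z) = mul y (star x z) := hinj <| by
    rw [hM.left_comm, hstar, hM.left_comm E, hstar, hM.left_comm]
  refine ⟨fun x y z => hinj ?_, fun f x y => hinj ?_, fun x y => hinj ?_,
    fun x y z => hinj ?_, fun x => hinj ?_⟩
  · rw [hM.add_right, hstar, hstar, hstar, hM.add_left]
  · rw [hM.smul_right, hstar, hstar, hM.smul_left]
  · rw [hstar, hstar, hM.comm]
  · rw [hstar, hstar, hM.comm, swap]
    exact congrArg (mul x) (hinj (by rw [hstar, hstar, hM.comm]))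
  · rw [hstar]

end IsUnitalMul

namespace IsTFFlatConnection

variable {V : VectorFields A X} {conn : X → X → X} (hC : IsTFFlatConnection V conn)
include hC

theorem algebraMap_smul_right (x : X) (c : ℂ) (y : X) :
    conn x (algebraMap ℂ A c • y) = algebraMap ℂ A c • conn x y := by
  rw [hC.leibniz, V.act_algebraMap, zero_smul, zero_add]

theorem sub_left (x y z : X) : conn (x - y) z = conn x z - conn y z := by
  rw [sub_eq_add_neg, ← neg_one_smul A y, hC.add_left, hC.smul_left, neg_one_smul,
    ← sub_eq_add_neg]

theorem sub_right (x y z : X) : conn x (y - z) = conn x y - conn x z := by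
  have hneg : conn x (-z) = -conn x z := by
    simpa using hC.algebraMap_smul_right x (-1) z
  rw [sub_eq_add_neg, hC.add_right, hneg, ← sub_eq_add_neg]

end IsTFFlatConnection

/-- The paper's `𝛁^{(λ,0)}` is `dualConn ∇ ⋆_λ (E - λe)`, since `∇_w e = 0`. -/
def dualConn (conn star : X → X → X) (E : X) : X → X → X :=
  fun x y => conn x y - conn (star x y) E

omit [Algebra ℂ A] in
theorem IsUnitalMul.dualConn_hydro {mul star : X → X → X} {e E : X}
    (hM : IsUnitalMul (A := A) mul e) (hinj : Function.Injective (mul E))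
    (hstar : ∀ x y : X, mul E (star x y) = mul x y) (conn : X → X → X) (x y z : X) :
    dualConn conn star E x (mul y z) - dualConn conn star E y (mul x z)
      = conn x (mul y z) - conn y (mul x z) := by
  have hstar_mul : star x (mul y z) = star y (mul x z) := hinj <| by
    rw [hstar, hstar, hM.left_comm]
  simp only [dualConn, hstar_mul]
  abel

namespace IsSaitoStructure

variable {V : VectorFields A X} {conn mul star : X → X → X} {e E : X}

theorem conn_sub_smul_unit (h : IsSaitoStructure V conn mul e E) (x : X) (c : ℂ) :
    conn x (E - algebraMap ℂ A c • e) = conn x E := by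
  rw [h.conn_flat.sub_right, h.conn_flat.algebraMap_smul_right, h.SS3, smul_zero, sub_zero]

theorem conn_conn_euler (h : IsSaitoStructure V conn mul e E) (x y : X) :
    conn x (conn y E) = conn (conn x y) E :=
  sub_eq_zero.mp (h.SS4 x y)

/-- `e` is an infinitesimal symmetry of `∗`, since `[e, ·] = ∇_e` by (SS3). -/
theorem bracket_unit_mul (h : IsSaitoStructure V conn mul e E) (x y : X) :
    V.bracket e (mul x y) - mul (V.bracket e x) y - mul x (V.bracket e y) = 0 := by
  have hbr (w : X) : V.bracket e w = conn e w := by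
    rw [← h.conn_flat.torsion_free, h.SS3, sub_zero]
  have hSS1 := h.SS1 e x y
  simp only [h.mul_unital.unit, hbr] at hSS1 ⊢
  linear_combination (norm := abel) hSS1

theorem sub_smul_unit (h : IsSaitoStructure V conn mul e E) (c : ℂ) :
    IsSaitoStructure V conn mul e (E - algebraMap ℂ A c • e) := by
  have hM := h.mul_unital
  refine ⟨h.conn_flat, hM, h.SS1, fun x y => ?_, h.SS3, fun x y => ?_⟩
  · have hc := congrArg (algebraMap ℂ A c • ·) (h.bracket_unit_mul x y)
    simp only [smul_sub, smul_zero] at hc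
    simp only [V.bracket_sub_left, V.bracket_algebraMap_smul_left, hM.sub_left,
      hM.sub_right, hM.smul_left, hM.smul_right]
    linear_combination (norm := abel) h.SS2 x y - hc
  · rw [h.conn_sub_smul_unit, h.conn_sub_smul_unit]
    exact h.SS4 x y

theorem euler_mul_conn (h : IsSaitoStructure V conn mul e E) (x z : X) :
    mul E (conn x z) = conn x (mul E z) + mul x (conn z E) - mul x z - conn (mul x z) E := by
  have hM := h.mul_unital
  have hSS2 := h.SS2 x z
  have hSS1 := h.SS1 x E z
  simp only [← h.conn_flat.torsion_free, hM.sub_left, hM.sub_right] at hSS2 hSS1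
  linear_combination (norm := abel) -hSS2 - hSS1

section Dual

variable (h : IsSaitoStructure V conn mul e E) (hinj : Function.Injective (mul E))
  (hstar : ∀ x y : X, mul E (star x y) = mul x y)
include h hinj hstar

/-- (ASS1) with `∇` as the outer and `𝛁` as the inner connection. -/
theorem dualConn_mixed_ASS1 (x y z : X) :
    conn x (star y z) - star y (dualConn conn star E x z) - conn y (star x z)
        + star x (dualConn conn star E y z)
      = star (V.bracket x y) z := by
  have hM := h.mul_unital
  have swap : mul x (star y z) = mul y (star x z) := hinj <| by
    rw [hM.left_comm, hstar, hM.left_comm E, hstar, hM.left_comm]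
  apply hinj
  simp only [dualConn, hM.add_right, hM.sub_right, h.euler_mul_conn, hstar]
  linear_combination (norm := abel) h.SS1 x y z - swap - congrArg (conn · E) swap

theorem isTFFlatConnection_dualConn : IsTFFlatConnection V (dualConn conn star E) := by
  have hC := h.conn_flat
  have hS := h.mul_unital.dual hinj hstar
  refine ⟨fun x y z => ?_, fun f x y => ?_, fun x y z => ?_, fun x f y => ?_,
    fun x y => ?_, fun x y z => ?_⟩
  · simp only [dualConn, hC.add_left, hS.add_left]
    abel
  · simp only [dualConn, hC.smul_left, hS.smul_left, smul_sub]
  · simp only [dualConn, hC.add_right, hS.add_right, hC.add_left]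
    abel
  · simp only [dualConn, hC.leibniz, hS.smul_right, hC.smul_left, smul_sub]
    abel
  · simp only [dualConn, hS.comm y x, ← hC.torsion_free]
    abel
  · have hE := congrArg (conn · E) (h.dualConn_mixed_ASS1 hinj hstar x y z)
    simp only [dualConn, hC.add_left, hC.sub_left] at hE
    simp only [dualConn, hC.sub_right, h.conn_conn_euler]
    linear_combination (norm := abel) hC.flat x y z - hE

theorem dualConn_ASS1 (x y z : X) :
    dualConn conn star E x (star y z) - star y (dualConn conn star E x z)
        - dualConn conn star E y (star x z) + star x (dualConn conn star E y z)
      = star (V.bracket x y) z := by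
  have hmixed := h.dualConn_mixed_ASS1 hinj hstar x y z
  have hS := h.mul_unital.dual hinj hstar
  simp only [dualConn] at hmixed ⊢
  linear_combination (norm := abel) hmixed - congrArg (conn · E) (hS.left_comm x y z)

end Dual

theorem isBiFlat (h : IsSaitoStructure V conn mul e E) (hU : Function.Bijective (mul E))
    (hstar : ∀ x y : X, mul E (star x y) = mul x y) :
    IsBiFlat V conn (dualConn conn star E) mul star e E := by
  have hS := h.mul_unital.dual hU.1 hstar
  refine ⟨h.conn_flat, h.isTFFlatConnection_dualConn hU.1 hstar, h.mul_unital, hS, h.SS1,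
    h.SS2, h.SS3, h.dualConn_ASS1 hU.1 hstar, fun x => ?_, hU, hstar,
    h.mul_unital.dualConn_hydro hU.1 hstar conn⟩
  rw [dualConn, hS.comm, hS.unit, sub_self]

end IsSaitoStructure

/-- Lemma 4.3 of the paper: a Saito structure `(∇, ∗, E)` together with the
dual data `⋆_λ`, `𝛁^{(λ,0)}` (on the subset `M_λ` where
`U_λ x = (E - λe) ∗ x` is invertible) forms a bi-flat `F`-manifold; in
particular `∇` and `𝛁^{(λ,0)}` are almost hydrodynamically equivalent. -/
theorem saito_gives_biflat
    (V : VectorFields A X) (conn mul : X → X → X) (e E : X) (lam : ℂ)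
    (h : IsSaitoStructure V conn mul e E)
    (hU : Function.Bijective fun v : X => mul (E - algebraMap ℂ A lam • e) v) :
    ∀ star conn2 : X → X → X,
      (∀ x y : X, star x y
        = Function.invFun (fun v : X => mul (E - algebraMap ℂ A lam • e) v) (mul x y)) →
      (∀ x y : X, conn2 x y = conn x y - conn (star x y) E) →
      IsBiFlat V conn conn2 mul star e (E - algebraMap ℂ A lam • e) ∧
      ∀ x y z : X,
        conn2 x (mul y z) - conn2 y (mul x z) = conn x (mul y z) - conn y (mul x z) := by
  intro star conn2 hstar hconn2
  have hshift := h.sub_smul_unit lam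
  have hstar' (x y : X) : mul (E - algebraMap ℂ A lam • e) (star x y) = mul x y := by
    rw [hstar]
    exact Function.rightInverse_invFun hU.2 _
  have hconn2' : conn2 = dualConn conn star (E - algebraMap ℂ A lam • e) := by
    ext x y
    rw [hconn2, dualConn, h.conn_sub_smul_unit]
  subst hconn2'
  exact ⟨hshift.isBiFlat hU hstar', h.mul_unital.dualConn_hydro hU.1 hstar' conn⟩
end
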